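/- Let q be a prime, K a finite index set, B a natural number, and a, b : K → ℤ functions with |a j − b j| ≤ B for every j ∈ K. If q > |K| · B², then the sum Σ_{j∈K} ((a j − b j : ZMod q))² equals 0 in ZMod q if and only if a j = b j for every j ∈ K. -/
import Mathlib


/-- If the prime `q` exceeds `|K| · B²` and `|a j − b j| ≤ B` on `K`, then the sum
`Σ_{j∈K} (a j − b j)²` vanishes in `ZMod q` iff `a = b` on `K`. -/
theorem sum_sq_eq_zero_iff_eq {ι : Type*} (q : ℕ) (hq : q.Prime)
    (K : Finset ι) (B : ℕ) (a b : ι → ℤ)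
    (hab : ∀ j ∈ K, |a j - b j| ≤ (B : ℤ))
    (hqK : K.card * B ^ 2 < q) :
    (∑ j ∈ K, ((a j - b j : ℤ) : ZMod q) ^ 2 = 0) ↔ ∀ j ∈ K, a j = b j := by
  have hS0 : (0:ℤ) ≤ ∑ j ∈ K, (a j - b j) ^ 2 :=
    Finset.sum_nonneg fun j _ => sq_nonneg _
  have hSlt : ∑ j ∈ K, (a j - b j) ^ 2 < (q:ℤ) := by
    calc ∑ j ∈ K, (a j - b j) ^ 2 ≤ ∑ j ∈ K, (B:ℤ) ^ 2 := by
          refine Finset.sum_le_sum fun j hj => ?_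
          have := hab j hj
          calc (a j - b j) ^ 2 = |a j - b j| ^ 2 := (sq_abs _).symm
            _ ≤ (B:ℤ) ^ 2 := pow_le_pow_left₀ (abs_nonneg _) this 2
      _ = (K.card * B ^ 2 : ℕ) := by push_cast; rw [Finset.sum_const, nsmul_eq_mul]
      _ < (q:ℤ) := by exact_mod_cast hqK
  constructor
  · intro h
    have hcast : ((∑ j ∈ K, (a j - b j) ^ 2 : ℤ) : ZMod q) = 0 := by push_cast; push_cast at h; exact h
    rw [ZMod.intCast_zmod_eq_zero_iff_dvd] at hcast
    have hSz : ∑ j ∈ K, (a j - b j) ^ 2 = 0 := by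
      rcases Int.eq_zero_of_dvd_of_nonneg_of_lt hS0 hSlt hcast with h'
      exact h'
    intro j hj
    have := (Finset.sum_eq_zero_iff_of_nonneg (fun j _ => sq_nonneg (a j - b j))).mp hSz j hj
    have : a j - b j = 0 := pow_eq_zero_iff (by norm_num) |>.mp this
    linarith
  · intro h
    refine Finset.sum_eq_zero fun j hj => ?_
    rw [h j hj]; simp
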